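/- arXiv:1609.03669 — 3 statements merged into one kernel-verified Lean document; each statement's English description precedes it below -/
import Mathlib

section
/- Let A, B be real symmetric n×n matrices with B negative semi-definite, and let λ > 0 be real. If k = k_r + i·k_i ∈ ℂ satisfies det(kA - iB - λI) = 0 and there exists a nonzero eigenvector, then k_r · k_i ≤ 0. -/
/-!
Pairing the kernel equation with `star v` gives the scalar equation `k a - i b = λ c`, where
`a = v* A v` and `b = v* B v` are real (Hermitian forms), `b ≤ 0` and `c = v* v > 0`. Its real part
reads `k_r a = λ c`, so `a ≠ 0`, and its imaginary part reads `k_i a = b`; multiplying,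
`k_r k_i a² = λ c b ≤ 0`.
-/

open Matrix ComplexOrder

variable {ι : Type*}

lemma Matrix.IsSymm.isHermitian_map_ofReal {A : Matrix ι ι ℝ} (hA : A.IsSymm) :
    (A.map Complex.ofReal).IsHermitian :=
  IsHermitian.map hA _ fun x => (Complex.conj_ofReal x).symm

variable [Fintype ι]

lemma Matrix.re_star_dotProduct_map_ofReal_mulVec (M : Matrix ι ι ℝ) (v : ι → ℂ) :
    (star v ⬝ᵥ M.map Complex.ofReal *ᵥ v).re =
      (fun i => (v i).re) ⬝ᵥ M *ᵥ (fun i => (v i).re)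
        + (fun i => (v i).im) ⬝ᵥ M *ᵥ (fun i => (v i).im) := by
  simp only [dotProduct, mulVec, map_apply, Finset.mul_sum, Complex.re_sum,
    ← Finset.sum_add_distrib]
  refine Finset.sum_congr rfl fun i _ => Finset.sum_congr rfl fun j _ => ?_
  simp only [Pi.star_apply, Complex.star_def, Complex.mul_re, Complex.mul_im, Complex.conj_re,
    Complex.conj_im, Complex.ofReal_re, Complex.ofReal_im]
  ring

lemma Matrix.star_dotProduct_map_ofReal_mulVec_nonpos {B : Matrix ι ι ℝ} (hB : B.IsSymm)
    (hB_nonpos : ∀ v, v ⬝ᵥ B *ᵥ v ≤ 0) (v : ι → ℂ) :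
    star v ⬝ᵥ B.map Complex.ofReal *ᵥ v ≤ 0 := by
  rw [Complex.le_def]
  refine ⟨?_, hB.isHermitian_map_ofReal.im_star_dotProduct_mulVec_self v⟩
  rw [re_star_dotProduct_map_ofReal_mulVec]
  exact add_nonpos (hB_nonpos _) (hB_nonpos _)

lemma Complex.re_mul_im_nonpos_of_mul_sub_I_mul_eq {k a b c : ℂ} (ha : a.im = 0) (hb : b ≤ 0)
    (hc : 0 < c) (h : k * a - I * b = c) : k.re * k.im ≤ 0 := by
  obtain ⟨hb_re, hb_im⟩ : b.re ≤ 0 ∧ b.im = 0 := le_def.mp hb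
  obtain ⟨hc_re, hc_im⟩ : 0 < c.re ∧ 0 = c.im := lt_def.mp hc
  have h_re : k.re * a.re = c.re := by
    simpa [ha, hb_im] using congrArg re h
  have h_im : k.im * a.re = b.re := by
    linear_combination (by simpa [ha, ← hc_im] using congrArg im h : k.im * a.re - b.re = 0)
  have ha_re : a.re ≠ 0 := by
    rintro h0
    rw [h0, mul_zero] at h_re
    exact hc_re.ne h_re
  have h_prod : k.re * k.im * (a.re * a.re) ≤ 0 := by
    calc k.re * k.im * (a.re * a.re) = c.re * b.re := by rw [← h_re, ← h_im]; ring
      _ ≤ 0 := mul_nonpos_of_nonneg_of_nonpos hc_re.le hb_re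
  exact nonpos_of_mul_nonpos_left h_prod (mul_self_pos.mpr ha_re)

theorem k_re_mul_k_im_nonpos_general
    (n : ℕ) (A B : Matrix (Fin n) (Fin n) ℝ)
    (hA : A.IsSymm) (hB : B.IsSymm)
    (hBneg : ∀ v : Fin n → ℝ, v ⬝ᵥ B.mulVec v ≤ 0)
    (lam : ℝ) (hlam : 0 < lam) (k : ℂ)
    (v : Fin n → ℂ) (hv : v ≠ 0)
    (hker : (k • A.map (Complex.ofReal) - Complex.I • B.map (Complex.ofReal)
        - (lam : ℂ) • (1 : Matrix (Fin n) (Fin n) ℂ)).mulVec v = 0) :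
    k.re * k.im ≤ 0 := by
  have hquad : k * (star v ⬝ᵥ A.map Complex.ofReal *ᵥ v)
      - Complex.I * (star v ⬝ᵥ B.map Complex.ofReal *ᵥ v) = lam * (star v ⬝ᵥ v) := by
    have := congrArg (star v ⬝ᵥ ·) hker
    simp only [sub_mulVec, smul_mulVec, one_mulVec, dotProduct_sub, dotProduct_smul, smul_eq_mul,
      dotProduct_zero] at this
    exact sub_eq_zero.mp this
  refine Complex.re_mul_im_nonpos_of_mul_sub_I_mul_eq ?_
    (star_dotProduct_map_ofReal_mulVec_nonpos hB hBneg v) ?_ hquad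
  · exact hA.isHermitian_map_ofReal.im_star_dotProduct_mulVec_self v
  · exact mul_pos (Complex.zero_lt_real.mpr hlam) (dotProduct_star_self_pos_iff.mpr hv)

theorem k_re_mul_k_im_nonpos
    (n : ℕ) (A B : Matrix (Fin n) (Fin n) ℝ)
    (hA : A.IsSymm) (hB : B.IsSymm)
    (hBneg : ∀ v : Fin n → ℝ, v ⬝ᵥ B.mulVec v ≤ 0)
    (lam : ℝ) (hlam : 0 < lam) (k : ℂ)
    (hdet : (k • A.map (Complex.ofReal) - Complex.I • B.map (Complex.ofReal)
        - (lam : ℂ) • (1 : Matrix (Fin n) (Fin n) ℂ)).det = 0)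
    (v : Fin n → ℂ) (hv : v ≠ 0)
    (hker : (k • A.map (Complex.ofReal) - Complex.I • B.map (Complex.ofReal)
        - (lam : ℂ) • (1 : Matrix (Fin n) (Fin n) ℂ)).mulVec v = 0) :
    k.re * k.im ≤ 0 :=
  k_re_mul_k_im_nonpos_general n A B hA hB hBneg lam hlam k v hv hker
end

section
/- Let A = P⁻¹SP and Q = P⁻¹NP where P is an invertible real matrix, S is real symmetric, and N is real symmetric negative semi-definite. Then for every real k, every root Ω of det(ΩI - kA + iQ) = 0 has non-negative imaginary part. -/
open Matrix Complex
open scoped ComplexOrder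

/-!
Conjugating by `P` turns the dispersion matrix into `Ω - (k S + i (-N))`, with `k S` Hermitian
and `-N` positive semidefinite. Pairing a null vector `w` with the eigen-equation gives
`Ω ‖w‖² = k ⟪w, S w⟫ + i ⟪w, -N w⟫`, where both brackets are real and the second is
nonnegative, so `Im Ω · ‖w‖² = ⟪w, -N w⟫ ≥ 0`.
-/

namespace Matrix

variable {n : Type*} [Fintype n]

theorem re_star_dotProduct_map_ofReal_mulVec_s12 (M : Matrix n n ℝ) (w : n → ℂ) :
    (star w ⬝ᵥ M.map ofReal *ᵥ w).re
      = (fun i ↦ (w i).re) ⬝ᵥ M *ᵥ (fun i ↦ (w i).re)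
        + (fun i ↦ (w i).im) ⬝ᵥ M *ᵥ (fun i ↦ (w i).im) := by
  simp only [dotProduct, mulVec, Pi.star_apply, map_apply, re_sum, mul_re, mul_im,
    RCLike.star_def, conj_re, conj_im, ofReal_re, ofReal_im, Finset.mul_sum,
    ← Finset.sum_add_distrib]
  refine Finset.sum_congr rfl fun i _ ↦ Finset.sum_congr rfl fun j _ ↦ ?_
  ring

theorem PosSemidef.map_ofReal {M : Matrix n n ℝ} (hM : M.PosSemidef) :
    (M.map ofReal).PosSemidef := by
  have hH : (M.map ofReal).IsHermitian :=
    hM.1.map _ fun x ↦ (conj_ofReal x).symm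
  refine .of_dotProduct_mulVec_nonneg hH fun w ↦ Complex.nonneg_iff.mpr ⟨?_, ?_⟩
  · rw [re_star_dotProduct_map_ofReal_mulVec_s12]
    exact add_nonneg (by simpa using hM.dotProduct_mulVec_nonneg _)
      (by simpa using hM.dotProduct_mulVec_nonneg _)
  · exact (hH.im_star_dotProduct_mulVec_self w).symm

theorem im_nonneg_of_mulVec_eq_smul {H K : Matrix n n ℂ} (hH : H.IsHermitian)
    (hK : K.PosSemidef) {Ω : ℂ} {w : n → ℂ} (hw : w ≠ 0)
    (h : (H + I • K) *ᵥ w = Ω • w) : 0 ≤ Ω.im := by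
  have hquad : Ω * (star w ⬝ᵥ w) = star w ⬝ᵥ H *ᵥ w + I * (star w ⬝ᵥ K *ᵥ w) := by
    rw [← smul_eq_mul, ← dotProduct_smul, ← h, add_mulVec, smul_mulVec, dotProduct_add,
      dotProduct_smul, smul_eq_mul]
  have hnorm := Complex.pos_iff.mp (dotProduct_star_self_pos_iff.mpr hw)
  have hKw := Complex.nonneg_iff.mp (hK.dotProduct_mulVec_nonneg w)
  have him := congrArg Complex.im hquad
  simp only [mul_im, add_im, I_re, I_im, ← hnorm.2, ← hKw.2,
    show (star w ⬝ᵥ H *ᵥ w).im = 0 from hH.im_star_dotProduct_mulVec_self w] at him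
  exact (mul_nonneg_iff_of_pos_right hnorm.1).mp (by linarith)

theorem im_nonneg_of_det_eq_zero [DecidableEq n] {H K : Matrix n n ℂ} (hH : H.IsHermitian)
    (hK : K.PosSemidef) {Ω : ℂ} (h : (Ω • 1 - (H + I • K)).det = 0) : 0 ≤ Ω.im := by
  obtain ⟨w, hw, hker⟩ := exists_mulVec_eq_zero_iff.mpr h
  rw [sub_mulVec, smul_mulVec, one_mulVec, sub_eq_zero] at hker
  exact im_nonneg_of_mulVec_eq_smul hH hK hw hker.symm

theorem map_nonsing_inv {α β : Type*} [CommRing α] [CommRing β] [DecidableEq n]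
    (f : α →+* β) {M : Matrix n n α} (hM : IsUnit M.det) : M⁻¹.map f = (M.map f)⁻¹ := by
  refine (inv_eq_left_inv ?_).symm
  rw [← f.mapMatrix_apply, ← f.mapMatrix_apply, ← map_mul, nonsing_inv_mul _ hM, map_one]

end Matrix

theorem dispersion_relation_roots_nonneg_im
    (N : ℕ) (P S Nm : Matrix (Fin N) (Fin N) ℝ)
    (hP : IsUnit P.det)
    (hS : S.IsSymm) (hN : Nm.IsSymm)
    (hNneg : ∀ v : Fin N → ℝ, v ⬝ᵥ Nm.mulVec v ≤ 0)
    (A Q : Matrix (Fin N) (Fin N) ℝ)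
    (hA : A = P⁻¹ * S * P) (hQ : Q = P⁻¹ * Nm * P)
    (k : ℝ) (Ω : ℂ)
    (hroot : (Ω • (1 : Matrix (Fin N) (Fin N) ℂ)
        - (k : ℂ) • A.map (Complex.ofReal)
        + Complex.I • Q.map (Complex.ofReal)).det = 0) :
    0 ≤ Ω.im := by
  set C : Matrix (Fin N) (Fin N) ℝ →+* Matrix (Fin N) (Fin N) ℂ := ofRealHom.mapMatrix
  have hCP : IsUnit (C P) := (isUnit_iff_isUnit_det _).mpr <| by
    simpa [C, RingHom.map_det] using hP.map ofRealHom
  have hconj : ∀ M, C (P⁻¹ * M * P) = (C P)⁻¹ * C M * C P := fun M ↦ by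
    rw [map_mul, map_mul, RingHom.mapMatrix_apply, map_nonsing_inv _ hP]; rfl
  have hroot' : (Ω • 1 - ((k : ℂ) • C S + I • C (-Nm))).det = 0 := by
    rw [← det_conj' hCP, ← hroot, hA, hQ]
    change _ = (_ - _ • C _ + _ • C _).det
    rw [hconj, hconj, map_neg]
    congr 1
    simp only [Matrix.mul_sub, Matrix.sub_mul, Matrix.mul_add, Matrix.add_mul, Matrix.mul_smul,
      Matrix.smul_mul, Matrix.mul_neg, Matrix.neg_mul, Matrix.mul_one,
      nonsing_inv_mul _ ((isUnit_iff_isUnit_det _).mp hCP)]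
    module
  refine im_nonneg_of_det_eq_zero ?_ ?_ hroot'
  · exact ((isHermitian_iff_isSymm.mpr hS).map _ fun x ↦ (conj_ofReal x).symm).smul
      (conj_ofReal k)
  · refine PosSemidef.map_ofReal (.of_dotProduct_mulVec_nonneg ?_ fun v ↦ ?_)
    · exact (isHermitian_iff_isSymm.mpr hN).neg
    · simpa [neg_mulVec] using hNneg v
end

section
/- Let T and T_O be diagonal invertible matrices, let P̄_b be a matrix, and let P̄_p = T_O² P̄_b (T²)⁻¹. If Q̃ ∈ ℝ^{N×N} is such that T⁻¹Q̃T is symmetric negative semi-definite, then T_O⁻¹(P̄_p Q̃ P̄_bᵀ)T_O = (T⁻¹P̄_bᵀT_O)ᵀ(T⁻¹Q̃T)(T⁻¹P̄_bᵀT_O) is also symmetric negative semi-definite. -/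
open Matrix

theorem OHME_conjugated_collision_neg_semidef
    (N NO : ℕ)
    (T : Matrix (Fin N) (Fin N) ℝ) (t : Fin N → ℝ)
    (TO : Matrix (Fin NO) (Fin NO) ℝ) (tO : Fin NO → ℝ)
    (hT : T = Matrix.diagonal t) (hTunit : IsUnit T.det)
    (hTO : TO = Matrix.diagonal tO) (hTOunit : IsUnit TO.det)
    (Pb : Matrix (Fin NO) (Fin N) ℝ)
    (Pp : Matrix (Fin NO) (Fin N) ℝ) (hPp : Pp = TO ^ 2 * Pb * (T ^ 2)⁻¹)
    (Qt : Matrix (Fin N) (Fin N) ℝ)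
    (hsymm : (T⁻¹ * Qt * T).IsSymm)
    (hneg : ∀ v : Fin N → ℝ, v ⬝ᵥ (T⁻¹ * Qt * T).mulVec v ≤ 0) :
    TO⁻¹ * (Pp * Qt * Pbᵀ) * TO
      = (T⁻¹ * Pbᵀ * TO)ᵀ * (T⁻¹ * Qt * T) * (T⁻¹ * Pbᵀ * TO)
    ∧ (TO⁻¹ * (Pp * Qt * Pbᵀ) * TO).IsSymm
    ∧ ∀ w : Fin NO → ℝ, w ⬝ᵥ (TO⁻¹ * (Pp * Qt * Pbᵀ) * TO).mulVec w ≤ 0 := by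
  have hTt : Tᵀ = T := by rw [hT, Matrix.diagonal_transpose]
  have hTOt : TOᵀ = TO := by rw [hTO, Matrix.diagonal_transpose]
  have key : TO⁻¹ * (Pp * Qt * Pbᵀ) * TO
      = (T⁻¹ * Pbᵀ * TO)ᵀ * (T⁻¹ * Qt * T) * (T⁻¹ * Pbᵀ * TO) := by
    subst hPp
    simp only [Matrix.transpose_mul, Matrix.transpose_nonsing_inv, hTt, hTOt,
      Matrix.transpose_transpose, pow_two, Matrix.mul_inv_rev, Matrix.mul_assoc,
      Matrix.nonsing_inv_mul_cancel_left _ _ hTOunit,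
      Matrix.mul_nonsing_inv_cancel_left _ _ hTunit]
  refine ⟨key, ?_, ?_⟩
  · rw [key]
    set S := T⁻¹ * Qt * T with hS
    set A := T⁻¹ * Pbᵀ * TO with hA
    show (Aᵀ * S * A)ᵀ = Aᵀ * S * A
    rw [Matrix.transpose_mul (Aᵀ * S) A, Matrix.transpose_mul Aᵀ S,
      Matrix.transpose_transpose, hsymm.eq]
    exact (Matrix.mul_assoc Aᵀ S A).symm
  · intro w
    rw [key]
    set A := T⁻¹ * Pbᵀ * TO with hA
    have : (Aᵀ * (T⁻¹ * Qt * T) * A).mulVec w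
        = Aᵀ.mulVec ((T⁻¹ * Qt * T).mulVec (A.mulVec w)) := by
      simp [Matrix.mulVec_mulVec, Matrix.mul_assoc]
    rw [this, Matrix.dotProduct_mulVec, Matrix.vecMul_transpose]
    exact hneg (A.mulVec w)
end
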